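/- arXiv:math-ph/0409055 — 2 statements merged into one kernel-verified Lean document; each statement's English description precedes it below -/
import Mathlib

section
/- Let N = dΓ(1) be the number operator on the bosonic Fock space over a separable Hilbert space 𝒦, and {e_j}_{j=1}^∞ a complete orthonormal system in 𝒦. For a vector Ψ and a natural number n, the following are equivalent: (1) Ψ ∈ ⋂_{i₁,…,i_n} D(a(e_{i₁})⋯a(e_{i_n})) and Σ_{i₁,…,i_n=1}^∞ ‖a(e_{i₁})⋯a(e_{i_n})Ψ‖² < ∞; (2) Ψ ∈ D(∏_{j=1}^n (N−j+1)^{1/2}). In that case the sum equals ‖∏_{j=1}^n (N−j+1)^{1/2} Ψ‖². -/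
open MeasureTheory

/-- The measure on the `n`-particle configuration space `Mⁿ`. -/
noncomputable def FockLayerMeasure {M : Type*} [MeasurableSpace M] (μ : Measure M) (n : ℕ) :
    Measure (Fin n → M) :=
  Measure.pi fun _ : Fin n => μ

/-- Kernel of the annihilation operator `a(f)` on the bosonic Fock space over `L²(M, μ)`. -/
noncomputable def annihilationKernel {M : Type*} [MeasurableSpace M] (μ : Measure M)
    (f : M → ℂ) (Ψ : ∀ n : ℕ, (Fin n → M) → ℂ) (n : ℕ) (x : Fin n → M) : ℂ :=
  (Real.sqrt (n + 1) : ℂ) * ∫ k, (starRingEnd ℂ) (f k) * Ψ (n + 1) (Fin.cons k x) ∂μ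

/-- Iterated annihilation operators `a(g₁)⋯a(g_r)Ψ`. -/
noncomputable def annihilationIter {M : Type*} [MeasurableSpace M] (μ : Measure M) :
    ∀ (r : ℕ), (Fin r → (M → ℂ)) → (∀ n : ℕ, (Fin n → M) → ℂ) → ∀ n : ℕ, (Fin n → M) → ℂ
  | 0, _, Ψ => Ψ
  | r + 1, g, Ψ => annihilationKernel μ (g 0)
      (annihilationIter μ r (fun i => g i.succ) Ψ)

section Aux

lemma ennreal_rpow_two (a : ENNReal) : a ^ (2:ℝ) = a ^ 2 := by
  rw [← ENNReal.rpow_natCast]; norm_num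

variable {M : Type*} [MeasurableSpace M] {μ : Measure M}

lemma memL2_of_sq {g : M → ℂ} (hg : Measurable g)
    (h : ∫⁻ k, (‖g k‖₊ : ENNReal) ^ 2 ∂μ ≠ ⊤) : MemLp g 2 μ := by
  refine ⟨hg.aestronglyMeasurable, ?_⟩
  rw [eLpNorm_eq_lintegral_rpow_enorm_toReal (by norm_num) (by norm_num)]
  refine ENNReal.rpow_lt_top_of_nonneg (by positivity) ?_
  simp only [ENNReal.toReal_ofNat, ennreal_rpow_two]
  exact h

lemma lintegral_sq_eq {g : M → ℂ} :
    ∫⁻ k, (‖g k‖₊ : ENNReal) ^ 2 ∂μ = (eLpNorm g 2 μ) ^ 2 := by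
  rw [eLpNorm_eq_lintegral_rpow_enorm_toReal (by norm_num) (by norm_num)]
  simp only [ENNReal.toReal_ofNat, ennreal_rpow_two, enorm_eq_nnnorm]
  rw [← ENNReal.rpow_natCast (_ ^ (1/(2:ℝ))) 2, ← ENNReal.rpow_mul]
  norm_num

lemma parseval (e : ℕ → M → ℂ) (hemeas : ∀ m, Measurable (e m))
    (horth : ∀ m m' : ℕ,
      (∫ k, (starRingEnd ℂ) (e m k) * e m' k ∂μ) = if m = m' then 1 else 0)
    (hcomplete : ∀ g : M → ℂ, MemLp g 2 μ →
      (∀ m, (∫ k, (starRingEnd ℂ) (e m k) * g k ∂μ) = 0) → g =ᵐ[μ] 0)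
    {g : M → ℂ} (hgm : Measurable g)
    (hfin : ∫⁻ k, (‖g k‖₊ : ENNReal) ^ 2 ∂μ ≠ ⊤) :
    ∑' j : ℕ, (‖∫ k, (starRingEnd ℂ) (e j k) * g k ∂μ‖₊ : ENNReal) ^ 2
      = ∫⁻ k, (‖g k‖₊ : ENNReal) ^ 2 ∂μ := by
  have he2 : ∀ m, MemLp (e m) 2 μ := by
    intro m
    rw [memLp_two_iff_integrable_sq_norm (hemeas m).aestronglyMeasurable]
    have h1 := horth m m
    simp only [if_pos rfl] at h1
    have hint : Integrable (fun k => (starRingEnd ℂ) (e m k) * e m k) μ := by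
      by_contra hc
      rw [integral_undef hc] at h1
      exact one_ne_zero h1.symm
    have heq : (fun k => (starRingEnd ℂ) (e m k) * e m k)
        = fun k => ((‖e m k‖ ^ 2 : ℝ) : ℂ) := by
      funext k
      rw [Complex.conj_mul']
      norm_cast
    rw [heq] at hint
    simpa [← Complex.ofReal_pow] using hint.re
  set v : ℕ → Lp ℂ 2 μ := fun j => (he2 j).toLp (e j) with hv
  have hinner : ∀ (j : ℕ) (G : Lp ℂ 2 μ) (g' : M → ℂ), (G : M → ℂ) =ᵐ[μ] g' →
      (inner ℂ (v j) G : ℂ) = ∫ k, (starRingEnd ℂ) (e j k) * g' k ∂μ := by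
    intro j G g' hG
    rw [L2.inner_def]
    refine integral_congr_ae ?_
    filter_upwards [(he2 j).coeFn_toLp, hG] with k h1 h2
    rw [RCLike.inner_apply, h1, h2, mul_comm]
  have honv : Orthonormal ℂ v := by
    rw [orthonormal_iff_ite]
    intro i j
    rw [hinner i (v j) (e j) (he2 j).coeFn_toLp, horth i j]
  have hbot : (Submodule.span ℂ (Set.range v))ᗮ = ⊥ := by
    rw [Submodule.eq_bot_iff]
    intro G hG
    have hGo : ∀ j, (inner ℂ (v j) G : ℂ) = 0 := fun j =>
      (Submodule.mem_orthogonal _ G).mp hG (v j) (Submodule.subset_span ⟨j, rfl⟩)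
    have h0 : (G : M → ℂ) =ᵐ[μ] 0 := by
      refine hcomplete G (Lp.memLp G) fun m => ?_
      rw [← hinner m G G (Filter.EventuallyEq.refl _ _)]
      exact hGo m
    exact Lp.eq_zero_iff_ae_eq_zero.mpr h0
  set b := HilbertBasis.mkOfOrthogonalEqBot honv hbot with hb
  have hbcoe : ∀ j, b j = v j := fun j =>
    congrFun (HilbertBasis.coe_mkOfOrthogonalEqBot honv hbot) j
  set G := (memL2_of_sq hgm hfin).toLp g with hG
  set c : ℕ → ℂ := fun j => ∫ k, (starRingEnd ℂ) (e j k) * g k ∂μ with hc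
  have hsum : HasSum (fun i => (inner ℂ G (b i) : ℂ) * inner ℂ (b i) G) (inner ℂ G G) :=
    b.hasSum_inner_mul_inner G G
  have hterm : ∀ i, (inner ℂ G (b i) : ℂ) * inner ℂ (b i) G = ((‖c i‖ ^ 2 : ℝ) : ℂ) := by
    intro i
    have h1 : (inner ℂ (b i) G : ℂ) = c i := by
      rw [hbcoe]; exact hinner i G g (MemLp.coeFn_toLp _)
    rw [← inner_conj_symm G (b i)] at *
    rw [h1, Complex.conj_mul']
    norm_cast
  rw [funext hterm, inner_self_eq_norm_sq_to_K] at hsum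
  have hre : HasSum (fun i => (‖c i‖ ^ 2 : ℝ)) (‖G‖ ^ 2) := by
    have := hsum.mapL Complex.reCLM
    simpa [← Complex.ofReal_pow] using this
  have hofReal : ∑' j : ℕ, (‖c j‖₊ : ENNReal) ^ 2 = ENNReal.ofReal (‖G‖ ^ 2) := by
    rw [← hre.tsum_eq, ENNReal.ofReal_tsum_of_nonneg (fun i => by positivity) hre.summable]
    congr 1
    funext i
    rw [ENNReal.ofReal_pow (norm_nonneg _), ofReal_norm, enorm_eq_nnnorm]
  rw [hofReal, lintegral_sq_eq]
  rw [ENNReal.ofReal_pow (norm_nonneg _)]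
  congr 1
  rw [Lp.norm_toLp, ENNReal.ofReal_toReal]
  exact (memL2_of_sq hgm hfin).2.ne

instance fockSigmaFinite (n : ℕ) [SigmaFinite μ] : SigmaFinite (FockLayerMeasure μ n) := by
  unfold FockLayerMeasure; infer_instance

lemma measurable_consmap (m : ℕ) :
    Measurable (fun p : M × (Fin m → M) => (Fin.cons p.1 p.2 : Fin (m+1) → M)) := by
  refine measurable_pi_lambda _ fun i => ?_
  refine Fin.cases ?_ ?_ i
  · simpa using measurable_fst
  · intro j
    simpa [Function.comp_def] using (measurable_pi_apply j).comp measurable_snd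

lemma measurePreserving_consmap (m : ℕ) [SigmaFinite μ] :
    MeasurePreserving (fun p : M × (Fin m → M) => (Fin.cons p.1 p.2 : Fin (m+1) → M))
      (μ.prod (FockLayerMeasure μ m)) (FockLayerMeasure μ (m+1)) := by
  have h := (measurePreserving_piFinSuccAbove (fun _ : Fin (m+1) => μ) 0).symm
  have heq : (fun p : M × (Fin m → M) => (Fin.cons p.1 p.2 : Fin (m+1) → M))
      = (MeasurableEquiv.piFinSuccAbove (fun _ : Fin (m+1) => M) 0).symm := by
    funext p
    simp [MeasurableEquiv.piFinSuccAbove, Fin.insertNth_zero, Fin.consEquiv]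
  rw [heq]
  exact h

lemma lintegral_cons (m : ℕ) [SigmaFinite μ] {F : (Fin (m+1) → M) → ENNReal}
    (hF : Measurable F) :
    ∫⁻ y, F y ∂(FockLayerMeasure μ (m+1))
      = ∫⁻ x, ∫⁻ k, F (Fin.cons k x) ∂μ ∂(FockLayerMeasure μ m) := by
  have hFc : Measurable fun p : M × (Fin m → M) => F (Fin.cons p.1 p.2) :=
    hF.comp (measurable_consmap m)
  rw [← (measurePreserving_consmap m).lintegral_comp hF]
  rw [lintegral_prod (fun p : M × (Fin m → M) => F (Fin.cons p.1 p.2)) hFc.aemeasurable]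
  exact lintegral_lintegral_swap hFc.aemeasurable

lemma measurable_cInt [SigmaFinite μ] {f : M → ℂ} (hf : Measurable f)
    {m : ℕ} {Φ : (Fin (m+1) → M) → ℂ} (hΦ : Measurable Φ) :
    Measurable (fun x : Fin m → M => ∫ k, (starRingEnd ℂ) (f k) * Φ (Fin.cons k x) ∂μ) := by
  have h : StronglyMeasurable fun p : (Fin m → M) × M =>
      (starRingEnd ℂ) (f p.2) * Φ (Fin.cons p.2 p.1) := by
    refine Measurable.stronglyMeasurable ?_
    refine Measurable.mul ?_ ?_
    · exact (Complex.continuous_conj.measurable.comp hf).comp measurable_snd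
    · exact hΦ.comp ((measurable_consmap m).comp (measurable_snd.prodMk measurable_fst))
  exact (h.integral_prod_right').measurable

lemma measurable_aKernel [SigmaFinite μ] {f : M → ℂ} (hf : Measurable f)
    {Ψ : ∀ n : ℕ, (Fin n → M) → ℂ} {m : ℕ} (hΨ : Measurable (Ψ (m+1))) :
    Measurable (annihilationKernel μ f Ψ m) := by
  unfold annihilationKernel
  exact (measurable_cInt hf hΨ).const_mul _

lemma measurable_aIter [SigmaFinite μ] {r : ℕ} {g : Fin r → M → ℂ}
    (hg : ∀ i, Measurable (g i)) {Ψ : ∀ n : ℕ, (Fin n → M) → ℂ}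
    (hΨ : ∀ n, Measurable (Ψ n)) (n : ℕ) :
    Measurable (annihilationIter μ r g Ψ n) := by
  induction r generalizing n with
  | zero => exact hΨ n
  | succ r ih =>
      show Measurable (annihilationKernel μ (g 0)
        (annihilationIter μ r (fun i => g i.succ) Ψ) n)
      exact measurable_aKernel (hg 0) (ih (fun i => hg i.succ) (n+1))

lemma sqc_sq (m : ℕ) : ((‖((Real.sqrt (m+1) : ℝ) : ℂ)‖₊ : ENNReal)) ^ 2
    = ((m : ENNReal) + 1) := by
  rw [← enorm_eq_nnnorm, ← ofReal_norm, ← ENNReal.ofReal_pow (norm_nonneg _)]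
  rw [Complex.norm_real, Real.norm_eq_abs, sq_abs, Real.sq_sqrt (by positivity)]
  rw [ENNReal.ofReal_add (by positivity) zero_le_one]
  simp

lemma aK_nnnorm_sq (f : M → ℂ) (Ψ : ∀ n : ℕ, (Fin n → M) → ℂ) (m : ℕ) (x : Fin m → M) :
    ((‖annihilationKernel μ f Ψ m x‖₊ : ENNReal)) ^ 2
      = ((m : ENNReal) + 1) *
        (‖∫ k, (starRingEnd ℂ) (f k) * Ψ (m + 1) (Fin.cons k x) ∂μ‖₊ : ENNReal) ^ 2 := by
  unfold annihilationKernel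
  rw [nnnorm_mul, ENNReal.coe_mul, mul_pow, sqc_sq]

lemma stepA [SigmaFinite μ] (e : ℕ → M → ℂ) (hemeas : ∀ m, Measurable (e m))
    (horth : ∀ m m' : ℕ,
      (∫ k, (starRingEnd ℂ) (e m k) * e m' k ∂μ) = if m = m' then 1 else 0)
    (hcomplete : ∀ g : M → ℂ, MemLp g 2 μ →
      (∀ m, (∫ k, (starRingEnd ℂ) (e m k) * g k ∂μ) = 0) → g =ᵐ[μ] 0)
    {Ψ : ∀ n : ℕ, (Fin n → M) → ℂ} {m : ℕ} (hΨ : Measurable (Ψ (m+1)))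
    (hfin : ∫⁻ y, (‖Ψ (m+1) y‖₊ : ENNReal) ^ 2 ∂(FockLayerMeasure μ (m+1)) ≠ ⊤) :
    ∑' j : ℕ, ∫⁻ x, (‖annihilationKernel μ (e j) Ψ m x‖₊ : ENNReal) ^ 2
        ∂(FockLayerMeasure μ m)
      = ((m : ENNReal) + 1) *
        ∫⁻ y, (‖Ψ (m+1) y‖₊ : ENNReal) ^ 2 ∂(FockLayerMeasure μ (m+1)) := by
  set c : ℕ → (Fin m → M) → ℂ :=
    fun j x => ∫ k, (starRingEnd ℂ) (e j k) * Ψ (m+1) (Fin.cons k x) ∂μ with hcdef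
  have hcm : ∀ j, Measurable (c j) := fun j => measurable_cInt (hemeas j) hΨ
  have hnsq : Measurable fun y => (‖Ψ (m+1) y‖₊ : ENNReal) ^ 2 :=
    (hΨ.nnnorm.coe_nnreal_ennreal).pow_const 2
  have h1 : ∀ j, ∫⁻ x, (‖annihilationKernel μ (e j) Ψ m x‖₊ : ENNReal) ^ 2
      ∂(FockLayerMeasure μ m)
      = ((m : ENNReal) + 1) * ∫⁻ x, (‖c j x‖₊ : ENNReal) ^ 2 ∂(FockLayerMeasure μ m) := by
    intro j
    rw [← lintegral_const_mul _ (((hcm j).nnnorm.coe_nnreal_ennreal).pow_const 2)]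
    refine lintegral_congr fun x => ?_
    exact aK_nnnorm_sq (e j) Ψ m x
  simp only [h1]
  rw [ENNReal.tsum_mul_left]
  congr 1
  rw [← lintegral_tsum (fun j => (((hcm j).nnnorm.coe_nnreal_ennreal).pow_const 2).aemeasurable)]
  rw [lintegral_cons m hnsq]
  have hFm : Measurable fun x : Fin m → M =>
      ∫⁻ k, (‖Ψ (m+1) (Fin.cons k x)‖₊ : ENNReal) ^ 2 ∂μ := by
    refine Measurable.lintegral_prod_right' (f := fun p : (Fin m → M) × M =>
      (‖Ψ (m+1) (Fin.cons p.2 p.1)‖₊ : ENNReal) ^ 2) ?_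
    exact (((hΨ.comp ((measurable_consmap m).comp
      (measurable_snd.prodMk measurable_fst))).nnnorm.coe_nnreal_ennreal).pow_const 2)
  have htot : ∫⁻ x, (∫⁻ k, (‖Ψ (m+1) (Fin.cons k x)‖₊ : ENNReal) ^ 2 ∂μ)
      ∂(FockLayerMeasure μ m) ≠ ⊤ := by
    rw [← lintegral_cons m hnsq]; exact hfin
  have hae : ∀ᵐ x ∂(FockLayerMeasure μ m),
      (∫⁻ k, (‖Ψ (m+1) (Fin.cons k x)‖₊ : ENNReal) ^ 2 ∂μ) < ⊤ :=
    ae_lt_top hFm htot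
  refine lintegral_congr_ae ?_
  filter_upwards [hae] with x hx
  have hgm : Measurable fun k => Ψ (m+1) (Fin.cons k x) :=
    hΨ.comp ((measurable_consmap m).comp (measurable_id.prodMk measurable_const))
  exact parseval e hemeas horth hcomplete hgm hx.ne

end Aux

section Main

variable {M : Type*} [MeasurableSpace M] {μ : Measure M}

lemma mainC [SigmaFinite μ] (e : ℕ → M → ℂ) (hemeas : ∀ m, Measurable (e m))
    (horth : ∀ m m' : ℕ,
      (∫ k, (starRingEnd ℂ) (e m k) * e m' k ∂μ) = if m = m' then 1 else 0)
    (hcomplete : ∀ g : M → ℂ, MemLp g 2 μ →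
      (∀ m, (∫ k, (starRingEnd ℂ) (e m k) * g k ∂μ) = 0) → g =ᵐ[μ] 0) :
    ∀ (n : ℕ) (Ψ : ∀ k : ℕ, (Fin k → M) → ℂ), (∀ k, Measurable (Ψ k)) →
    (∀ k, ∫⁻ y, (‖Ψ k y‖₊ : ENNReal) ^ 2 ∂(FockLayerMeasure μ k) ≠ ⊤) → ∀ m : ℕ,
    ∑' i : Fin n → ℕ, ∫⁻ x, (‖annihilationIter μ n (fun r => e (i r)) Ψ m x‖₊ : ENNReal) ^ 2
        ∂(FockLayerMeasure μ m)
      = (∏ j ∈ Finset.range n, ((m + 1 + j : ℕ) : ENNReal)) *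
        ∫⁻ y, (‖Ψ (m + n) y‖₊ : ENNReal) ^ 2 ∂(FockLayerMeasure μ (m + n)) := by
  intro n
  induction n with
  | zero =>
      intro Ψ hmeas hfin m
      rw [tsum_eq_single (default : Fin 0 → ℕ) (fun b hb => absurd (Subsingleton.elim b default) hb)]
      simp [annihilationIter]
  | succ n ih =>
      intro Ψ hmeas hfin m
      have hiter : ∀ (i₀ : ℕ) (i' : Fin n → ℕ),
          annihilationIter μ (n+1) (fun r => e ((Fin.cons i₀ i' : Fin (n+1) → ℕ) r)) Ψ
            = annihilationKernel μ (e i₀)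
                (annihilationIter μ n (fun r => e (i' r)) Ψ) := by
        intro i₀ i'
        show annihilationKernel μ ((fun r => e ((Fin.cons i₀ i' : Fin (n+1) → ℕ) r)) 0)
          (annihilationIter μ n (fun r => (fun s => e ((Fin.cons i₀ i' : Fin (n+1) → ℕ) s)) r.succ) Ψ) = _
        have h2 : (fun r : Fin n => (fun s => e ((Fin.cons i₀ i' : Fin (n+1) → ℕ) s)) r.succ)
            = fun r => e (i' r) := by
          funext r; simp
        rw [h2]
        simp
      -- reindex the sum
      rw [← (Fin.consEquiv (fun _ : Fin (n+1) => ℕ)).tsum_eq]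
      have hconsapp : ∀ p : ℕ × (Fin n → ℕ),
          (Fin.consEquiv (fun _ : Fin (n+1) => ℕ)) p = Fin.cons p.1 p.2 := fun p => rfl
      simp only [hconsapp]
      rw [ENNReal.tsum_prod']
      rw [ENNReal.tsum_comm]
      -- inner sums via stepA
      have hfin' : ∀ i' : Fin n → ℕ,
          ∫⁻ y, (‖annihilationIter μ n (fun r => e (i' r)) Ψ (m+1) y‖₊ : ENNReal) ^ 2
            ∂(FockLayerMeasure μ (m+1)) ≠ ⊤ := by
        intro i'
        have hle := ENNReal.le_tsum (f := fun i' : Fin n → ℕ =>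
          ∫⁻ y, (‖annihilationIter μ n (fun r => e (i' r)) Ψ (m+1) y‖₊ : ENNReal) ^ 2
            ∂(FockLayerMeasure μ (m+1))) i'
        rw [ih Ψ hmeas hfin (m+1)] at hle
        refine ne_top_of_le_ne_top ?_ hle
        refine ENNReal.mul_ne_top ?_ (hfin _)
        refine (ENNReal.prod_lt_top ?_).ne
        intro j _
        exact ENNReal.natCast_lt_top _
      have hstep : ∀ i' : Fin n → ℕ,
          ∑' i₀ : ℕ, ∫⁻ x,
            (‖annihilationIter μ (n+1) (fun r => e ((Fin.cons i₀ i' : Fin (n+1) → ℕ) r)) Ψ m x‖₊ : ENNReal) ^ 2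
              ∂(FockLayerMeasure μ m)
          = ((m : ENNReal) + 1) *
            ∫⁻ y, (‖annihilationIter μ n (fun r => e (i' r)) Ψ (m+1) y‖₊ : ENNReal) ^ 2
              ∂(FockLayerMeasure μ (m+1)) := by
        intro i'
        have := stepA e hemeas horth hcomplete
          (Ψ := fun k => annihilationIter μ n (fun r => e (i' r)) Ψ k) (m := m)
          (measurable_aIter (fun r => hemeas (i' r)) hmeas (m+1)) (hfin' i')
        simp only [hiter]
        exact this
      simp only [hstep]
      rw [ENNReal.tsum_mul_left, ih Ψ hmeas hfin (m+1)]
      have harith : m + (n + 1) = m + 1 + n := by omega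
      rw [harith, ← mul_assoc]
      congr 1
      rw [Finset.prod_range_succ', mul_comm]
      congr 1
      · refine Finset.prod_congr rfl fun j _ => ?_
        congr 1
        omega
      · push_cast; ring

end Main

/-- Let `N = dΓ(1)` be the number operator on the bosonic Fock space over `𝒦 = L²(M, μ)`
and `(e_j)` a complete orthonormal system of `𝒦`.  A Fock vector `Ψ` (realized by symmetric
kernels) satisfies `Ψ ∈ ⋂ D(a(e_{i₁})⋯a(e_{i_n}))` with
`∑_{i₁,…,i_n} ‖a(e_{i₁})⋯a(e_{i_n})Ψ‖² < ∞` if and only if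
`Ψ ∈ D(∏_{j=1}^n (N−j+1)^{1/2})`, and in that case the sum equals
`‖∏_{j=1}^n (N−j+1)^{1/2}Ψ‖² = ∑_m m(m−1)⋯(m−n+1)‖Ψ⁽ᵐ⁾‖²`. -/
theorem sum_iterated_annihilation_eq_number_product
    {M : Type*} [MeasurableSpace M] (μ : Measure M) [SigmaFinite μ]
    (e : ℕ → M → ℂ) (hemeas : ∀ m, Measurable (e m))
    (horth : ∀ m m' : ℕ,
      (∫ k, (starRingEnd ℂ) (e m k) * e m' k ∂μ) = if m = m' then 1 else 0)
    (hcomplete : ∀ g : M → ℂ, MemLp g 2 μ →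
      (∀ m, (∫ k, (starRingEnd ℂ) (e m k) * g k ∂μ) = 0) → g =ᵐ[μ] 0)
    (Ψ : ∀ n : ℕ, (Fin n → M) → ℂ) (hΨmeas : ∀ n, Measurable (Ψ n))
    (hΨsym : ∀ (n : ℕ) (σ : Equiv.Perm (Fin n)),
      ∀ᵐ x ∂(FockLayerMeasure μ n), Ψ n (x ∘ σ) = Ψ n x)
    (hΨL2 : (∑' n, ∫⁻ x, (‖Ψ n x‖₊ : ENNReal) ^ 2 ∂(FockLayerMeasure μ n)) < ⊤)
    (n : ℕ) :
    (∑' i : Fin n → ℕ, ∑' m : ℕ,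
          ∫⁻ x, (‖annihilationIter μ n (fun r => e (i r)) Ψ m x‖₊ : ENNReal) ^ 2
            ∂(FockLayerMeasure μ m)) =
        (∑' m : ℕ, (∏ j ∈ Finset.range n, ((m - j : ℕ) : ENNReal)) *
          ∫⁻ x, (‖Ψ m x‖₊ : ENNReal) ^ 2 ∂(FockLayerMeasure μ m)) ∧
      ((∑' i : Fin n → ℕ, ∑' m : ℕ,
          ∫⁻ x, (‖annihilationIter μ n (fun r => e (i r)) Ψ m x‖₊ : ENNReal) ^ 2
            ∂(FockLayerMeasure μ m)) < ⊤ ↔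
        (∑' m : ℕ, (∏ j ∈ Finset.range n, ((m - j : ℕ) : ENNReal)) *
          ∫⁻ x, (‖Ψ m x‖₊ : ENNReal) ^ 2 ∂(FockLayerMeasure μ m)) < ⊤) := by
  have hfin : ∀ k : ℕ, ∫⁻ y, (‖Ψ k y‖₊ : ENNReal) ^ 2 ∂(FockLayerMeasure μ k) ≠ ⊤ :=
    fun k => ne_top_of_le_ne_top hΨL2.ne (ENNReal.le_tsum k)
  have hmain : (∑' i : Fin n → ℕ, ∑' m : ℕ,
      ∫⁻ x, (‖annihilationIter μ n (fun r => e (i r)) Ψ m x‖₊ : ENNReal) ^ 2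
        ∂(FockLayerMeasure μ m)) =
      (∑' m : ℕ, (∏ j ∈ Finset.range n, ((m - j : ℕ) : ENNReal)) *
        ∫⁻ x, (‖Ψ m x‖₊ : ENNReal) ^ 2 ∂(FockLayerMeasure μ m)) := by
    rw [ENNReal.tsum_comm]
    have hleft : ∀ m : ℕ, (∑' i : Fin n → ℕ,
        ∫⁻ x, (‖annihilationIter μ n (fun r => e (i r)) Ψ m x‖₊ : ENNReal) ^ 2
          ∂(FockLayerMeasure μ m))
        = (∏ j ∈ Finset.range n, ((m + 1 + j : ℕ) : ENNReal)) *
          ∫⁻ y, (‖Ψ (m + n) y‖₊ : ENNReal) ^ 2 ∂(FockLayerMeasure μ (m + n)) :=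
      mainC e hemeas horth hcomplete n Ψ hΨmeas hfin
    rw [tsum_congr hleft]
    have hinj : Function.Injective (fun m : ℕ => m + n) := add_left_injective n
    have hsupp : (Function.support fun m : ℕ =>
        (∏ j ∈ Finset.range n, ((m - j : ℕ) : ENNReal)) *
          ∫⁻ x, (‖Ψ m x‖₊ : ENNReal) ^ 2 ∂(FockLayerMeasure μ m))
        ⊆ Set.range (fun m : ℕ => m + n) := by
      intro m hm
      by_contra hc
      have hmn : m < n := by
        by_contra hc2
        exact hc ⟨m - n, by show m - n + n = m; omega⟩
      have hz : (∏ j ∈ Finset.range n, ((m - j : ℕ) : ENNReal)) = 0 :=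
        Finset.prod_eq_zero (Finset.mem_range.mpr hmn) (by simp)
      refine hm ?_
      show (∏ j ∈ Finset.range n, ((m - j : ℕ) : ENNReal)) * _ = 0
      rw [hz, zero_mul]
    have hcong : ∀ m : ℕ, (∏ j ∈ Finset.range n, ((m + 1 + j : ℕ) : ENNReal)) *
        (∫⁻ y, (‖Ψ (m + n) y‖₊ : ENNReal) ^ 2 ∂(FockLayerMeasure μ (m + n)))
        = (∏ j ∈ Finset.range n, ((m + n - j : ℕ) : ENNReal)) *
        (∫⁻ y, (‖Ψ (m + n) y‖₊ : ENNReal) ^ 2 ∂(FockLayerMeasure μ (m + n))) := by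
      intro m
      congr 1
      rw [← Finset.prod_range_reflect (fun j => ((m + 1 + j : ℕ) : ENNReal)) n]
      refine Finset.prod_congr rfl fun j hj => ?_
      rw [Finset.mem_range] at hj
      congr 1
      omega
    rw [tsum_congr hcong]
    exact Function.Injective.tsum_eq (f := fun m : ℕ =>
      (∏ j ∈ Finset.range n, ((m - j : ℕ) : ENNReal)) *
        ∫⁻ x, (‖Ψ m x‖₊ : ENNReal) ^ 2 ∂(FockLayerMeasure μ m)) hinj hsupp
  exact ⟨hmain, by rw [hmain]⟩
end

section
/- Let V be a real-valued Schwartz function on ℝ^ν, A = −Δ + βV, and g ∈ 𝒮(ℝ^ν). Then for each m ≥ 0 there is a constant C_{g,m} with ‖ad_A^m(g)Φ‖_{L²} ≤ C_{g,m} (‖(−Δ)^{m/2}Φ‖_{L²} + ‖Φ‖_{L²}) for all Φ ∈ 𝒮(ℝ^ν). -/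
open MeasureTheory SchwartzMap

set_option synthInstance.maxHeartbeats 1000000
set_option maxHeartbeats 1000000

/-- Euclidean space `ℝ^ν`. -/
abbrev EuclSp (ν : ℕ) := EuclideanSpace ℝ (Fin ν)

/-- The partial derivative `∂/∂x_i` as an operator on Schwartz space. -/
noncomputable def partialDerivOp (ν : ℕ) (i : Fin ν) :
    𝓢(EuclSp ν, ℂ) →L[ℝ] 𝓢(EuclSp ν, ℂ) :=
  LineDeriv.lineDerivOpCLM ℝ 𝓢(EuclSp ν, ℂ) (EuclideanSpace.single i (1 : ℝ))

/-- The nonnegative Laplacian `−Δ = −∑ᵢ ∂ᵢ²` as an operator on Schwartz space. -/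
noncomputable def negLaplacian (ν : ℕ) : 𝓢(EuclSp ν, ℂ) →L[ℝ] 𝓢(EuclSp ν, ℂ) :=
  - ∑ i : Fin ν, partialDerivOp ν i * partialDerivOp ν i

/-- Multiplication by a function `V` of temperate growth, as an operator on Schwartz space. -/
noncomputable def mulOp {ν : ℕ} {V : EuclSp ν → ℂ} (hV : Function.HasTemperateGrowth V) :
    𝓢(EuclSp ν, ℂ) →L[ℝ] 𝓢(EuclSp ν, ℂ) :=
  SchwartzMap.bilinLeftCLM (ContinuousLinearMap.mul ℝ ℂ) hV

/-- The map `B ↦ [A, B]` on operators on Schwartz space. -/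
noncomputable def adOp {ν : ℕ} (A B : 𝓢(EuclSp ν, ℂ) →L[ℝ] 𝓢(EuclSp ν, ℂ)) :
    𝓢(EuclSp ν, ℂ) →L[ℝ] 𝓢(EuclSp ν, ℂ) :=
  A * B - B * A

/-- The `L²`-norm of `(−Δ)^{s/2}Φ`, defined via the Fourier transform as the `L²`-norm of
`ξ ↦ (2π|ξ|)^s 𝓕Φ(ξ)`. -/
noncomputable def sobolevSeminorm (ν : ℕ) (s : ℝ) (Φ : 𝓢(EuclSp ν, ℂ)) : ENNReal :=
  eLpNorm (fun ξ : EuclSp ν => (2 * Real.pi * ‖ξ‖) ^ s * ‖fourierTransformCLM ℂ Φ ξ‖) 2 volume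

open Real Complex FourierTransform

lemma schwartz_htg {E F : Type*} [NormedAddCommGroup E] [NormedSpace ℝ E]
    [NormedAddCommGroup F] [NormedSpace ℝ F] (f : 𝓢(E, F)) :
    Function.HasTemperateGrowth ⇑f := by
  refine ⟨f.smooth ⊤, fun n => ⟨0, ?_⟩⟩
  obtain ⟨C, -, hC⟩ := f.decay 0 n
  exact ⟨C, fun x => by simpa using hC x⟩

lemma mulOp_apply {ν : ℕ} {V : EuclSp ν → ℂ} (hV : Function.HasTemperateGrowth V)
    (Φ : 𝓢(EuclSp ν, ℂ)) (x : EuclSp ν) : mulOp hV Φ x = Φ x * V x := rfl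

lemma pderivOp_apply {ν : ℕ} (i : Fin ν) (Φ : 𝓢(EuclSp ν, ℂ)) (x : EuclSp ν) :
    partialDerivOp ν i Φ x = fderiv ℝ Φ x (EuclideanSpace.single i (1:ℝ)) := by
  exact lineDerivOp_apply_eq_fderiv _ _ _

/-- Leibniz rule as an operator identity. -/
lemma pderiv_mulOp {ν : ℕ} (i : Fin ν) (h : 𝓢(EuclSp ν, ℂ)) :
    partialDerivOp ν i * mulOp (schwartz_htg h) =
      mulOp (schwartz_htg h) * partialDerivOp ν i
        + mulOp (schwartz_htg (partialDerivOp ν i h)) := by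
  ext Φ x
  have hd : ∀ (u : 𝓢(EuclSp ν, ℂ)) (y : EuclSp ν), DifferentiableAt ℝ (⇑u) y :=
    fun u y => u.differentiableAt
  simp only [ContinuousLinearMap.mul_apply, ContinuousLinearMap.add_apply,
    SchwartzMap.add_apply, pderivOp_apply, mulOp_apply]
  rw [show (⇑(mulOp (schwartz_htg h) Φ)) = fun y => Φ y * h y from rfl]
  rw [fderiv_fun_mul (hd Φ x) (hd h x)]
  simp only [ContinuousLinearMap.add_apply, ContinuousLinearMap.coe_smul',
    Pi.smul_apply, smul_eq_mul]
  ring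

lemma fderiv_pderiv {ν : ℕ} (Φ : 𝓢(EuclSp ν, ℂ)) (v w x : EuclSp ν) :
    fderiv ℝ (fun y => fderiv ℝ Φ y v) x w = fderiv ℝ (fderiv ℝ ⇑Φ) x w v := by
  have hf' : DifferentiableAt ℝ (fderiv ℝ ⇑Φ) x :=
    ((Φ.smooth ⊤).fderiv_right (m := 1) (by norm_cast)).differentiable one_ne_zero x
  have h := ((ContinuousLinearMap.apply ℝ ℂ v).hasFDerivAt.comp x hf'.hasFDerivAt).fderiv
  calc fderiv ℝ (fun y => fderiv ℝ Φ y v) x w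
      = (((ContinuousLinearMap.apply ℝ ℂ v)).comp (fderiv ℝ (fderiv ℝ ⇑Φ) x)) w := by
        rw [← h]; rfl
    _ = fderiv ℝ (fderiv ℝ ⇑Φ) x w v := rfl

lemma pderiv_comm {ν : ℕ} (i j : Fin ν) :
    partialDerivOp ν i * partialDerivOp ν j = partialDerivOp ν j * partialDerivOp ν i := by
  ext Φ x
  have hsymm : ∀ v w, fderiv ℝ (fderiv ℝ ⇑Φ) x v w = fderiv ℝ (fderiv ℝ ⇑Φ) x w v := by
    intro v w
    refine second_derivative_symmetric (f := ⇑Φ) (f' := fderiv ℝ ⇑Φ) (x := x)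
      (fun y => Φ.differentiableAt.hasFDerivAt) ?_ v w
    exact (((Φ.smooth ⊤).fderiv_right (m := 1) (by norm_cast)).differentiable one_ne_zero x).hasFDerivAt
  simp only [ContinuousLinearMap.mul_apply, pderivOp_apply]
  rw [show (⇑(partialDerivOp ν j Φ)) = fun y => fderiv ℝ Φ y (EuclideanSpace.single j 1) from funext fun y => pderivOp_apply _ _ _,
      show (⇑(partialDerivOp ν i Φ)) = fun y => fderiv ℝ Φ y (EuclideanSpace.single i 1) from funext fun y => pderivOp_apply _ _ _,
      fderiv_pderiv, fderiv_pderiv, hsymm]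

/-- Composition of the partial derivatives indexed by a list. -/
noncomputable def derivL (ν : ℕ) (l : List (Fin ν)) : 𝓢(EuclSp ν, ℂ) →L[ℝ] 𝓢(EuclSp ν, ℂ) :=
  (l.map (partialDerivOp ν)).prod

lemma derivL_nil {ν : ℕ} : derivL ν [] = 1 := rfl

lemma derivL_cons {ν : ℕ} (i : Fin ν) (l : List (Fin ν)) :
    derivL ν (i :: l) = partialDerivOp ν i * derivL ν l := by
  simp [derivL]

lemma derivL_singleton {ν : ℕ} (i : Fin ν) : derivL ν [i] = partialDerivOp ν i := by
  simp [derivL]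

lemma derivL_append {ν : ℕ} (l l' : List (Fin ν)) :
    derivL ν (l ++ l') = derivL ν l * derivL ν l' := by
  simp [derivL]

lemma commute_pderiv_derivL {ν : ℕ} (i : Fin ν) (l : List (Fin ν)) :
    Commute (partialDerivOp ν i) (derivL ν l) := by
  refine Commute.list_prod_right _ _ fun j hj => ?_
  obtain ⟨j', -, rfl⟩ := List.mem_map.1 hj
  exact pderiv_comm i j'

lemma pderiv_mul_mulOp_mul {ν : ℕ} (i : Fin ν) (h : 𝓢(EuclSp ν, ℂ))
    (T : 𝓢(EuclSp ν, ℂ) →L[ℝ] 𝓢(EuclSp ν, ℂ)) :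
    partialDerivOp ν i * (mulOp (schwartz_htg h) * T) =
      mulOp (schwartz_htg h) * (partialDerivOp ν i * T)
        + mulOp (schwartz_htg (partialDerivOp ν i h)) * T := by
  rw [← mul_assoc, pderiv_mulOp, add_mul, mul_assoc]

lemma mulOp_mulOp {ν : ℕ} (W h : 𝓢(EuclSp ν, ℂ)) :
    mulOp (schwartz_htg W) * mulOp (schwartz_htg h)
      = mulOp (schwartz_htg (mulOp (schwartz_htg W) h)) := by
  ext Φ x
  simp only [ContinuousLinearMap.mul_apply, mulOp_apply]
  ring

/-- The class of operators which are finite combinations of `M_h ∘ ∂^α`, `|α| ≤ m`,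
with `h` Schwartz. -/
inductive Good (ν : ℕ) : ℕ → (𝓢(EuclSp ν, ℂ) →L[ℝ] 𝓢(EuclSp ν, ℂ)) → Prop
  | gen (h : 𝓢(EuclSp ν, ℂ)) (l : List (Fin ν)) (m : ℕ) (hl : l.length ≤ m) :
      Good ν m (mulOp (schwartz_htg h) * derivL ν l)
  | zero (m : ℕ) : Good ν m 0
  | add {m : ℕ} {T S : 𝓢(EuclSp ν, ℂ) →L[ℝ] 𝓢(EuclSp ν, ℂ)} :
      Good ν m T → Good ν m S → Good ν m (T + S)
  | smul (c : ℝ) {m : ℕ} {T : 𝓢(EuclSp ν, ℂ) →L[ℝ] 𝓢(EuclSp ν, ℂ)} :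
      Good ν m T → Good ν m (c • T)

namespace Good

variable {ν : ℕ} {m m' : ℕ} {T S : 𝓢(EuclSp ν, ℂ) →L[ℝ] 𝓢(EuclSp ν, ℂ)}

lemma mono (h : Good ν m T) : ∀ {m'}, m ≤ m' → Good ν m' T := by
  induction h with
  | gen h l m hl => exact fun hm => .gen h l _ (hl.trans hm)
  | zero m => exact fun _ => .zero _
  | add _ _ ih1 ih2 => exact fun hm => .add (ih1 hm) (ih2 hm)
  | smul c _ ih => exact fun hm => .smul c (ih hm)

lemma neg (h : Good ν m T) : Good ν m (-T) := by
  simpa using h.smul (-1)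

lemma sub (h : Good ν m T) (h' : Good ν m S) : Good ν m (T - S) := by
  simpa [sub_eq_add_neg] using h.add h'.neg

lemma pderiv_mul (i : Fin ν) (h : Good ν m T) : Good ν (m + 1) (partialDerivOp ν i * T) := by
  induction h with
  | gen h l m hl =>
      rw [show partialDerivOp ν i * (mulOp (schwartz_htg h) * derivL ν l)
          = mulOp (schwartz_htg h) * derivL ν (i :: l)
            + mulOp (schwartz_htg (partialDerivOp ν i h)) * derivL ν l by
        rw [pderiv_mul_mulOp_mul, derivL_cons]]
      exact .add (.gen _ _ _ (by simpa using Nat.succ_le_succ hl))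
        (.gen _ _ _ (hl.trans (Nat.le_succ m)))
  | zero m => rw [mul_zero]; exact .zero _
  | add _ _ ih1 ih2 => rw [mul_add]; exact ih1.add ih2
  | smul c _ ih => rw [mul_smul_comm]; exact ih.smul c

lemma mulOp_mul (W : 𝓢(EuclSp ν, ℂ)) (h : Good ν m T) :
    Good ν m (mulOp (schwartz_htg W) * T) := by
  induction h with
  | gen h l m hl =>
      rw [← mul_assoc, mulOp_mulOp]
      exact .gen _ _ _ hl
  | zero m => rw [mul_zero]; exact .zero _
  | add _ _ ih1 ih2 => rw [mul_add]; exact ih1.add ih2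
  | smul c _ ih => rw [mul_smul_comm]; exact ih.smul c

lemma mul_pderiv (i : Fin ν) (h : Good ν m T) : Good ν (m + 1) (T * partialDerivOp ν i) := by
  induction h with
  | gen h l m hl =>
      rw [mul_assoc, show partialDerivOp ν i = derivL ν [i] from (derivL_singleton i).symm,
        ← derivL_append]
      exact .gen _ _ _ (by simp only [List.length_append, List.length_singleton]; omega)
  | zero m => rw [zero_mul]; exact .zero _
  | add _ _ ih1 ih2 => rw [add_mul]; exact ih1.add ih2
  | smul c _ ih => rw [smul_mul_assoc]; exact ih.smul c

end Good

lemma good_derivL_mulOp {ν : ℕ} (W : 𝓢(EuclSp ν, ℂ)) (l : List (Fin ν)) :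
    Good ν l.length (derivL ν l * mulOp (schwartz_htg W)) := by
  induction l with
  | nil =>
      rw [derivL_nil, one_mul]
      simpa [derivL_nil] using Good.gen (ν := ν) W [] 0 (by simp)
  | cons i l ih =>
      rw [derivL_cons, mul_assoc]
      exact ih.pderiv_mul i

lemma Good.mul_mulOp {ν : ℕ} {m : ℕ} {T : 𝓢(EuclSp ν, ℂ) →L[ℝ] 𝓢(EuclSp ν, ℂ)}
    (W : 𝓢(EuclSp ν, ℂ)) (h : Good ν m T) : Good ν m (T * mulOp (schwartz_htg W)) := by
  induction h with
  | gen h l m hl =>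
      rw [mul_assoc]
      exact ((good_derivL_mulOp W l).mulOp_mul h).mono hl
  | zero m => rw [zero_mul]; exact .zero _
  | add _ _ ih1 ih2 => rw [add_mul]; exact ih1.add ih2
  | smul c _ ih => rw [smul_mul_assoc]; exact ih.smul c

section adalg

variable {ν : ℕ}

lemma adOp_add_left (A B T : 𝓢(EuclSp ν, ℂ) →L[ℝ] 𝓢(EuclSp ν, ℂ)) :
    adOp (A + B) T = adOp A T + adOp B T := by
  simp only [adOp, add_mul, mul_add]; abel

lemma adOp_smul_left (c : ℝ) (A T : 𝓢(EuclSp ν, ℂ) →L[ℝ] 𝓢(EuclSp ν, ℂ)) :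
    adOp (c • A) T = c • adOp A T := by
  simp only [adOp, smul_mul_assoc, mul_smul_comm, smul_sub]

lemma adOp_neg_left (A T : 𝓢(EuclSp ν, ℂ) →L[ℝ] 𝓢(EuclSp ν, ℂ)) :
    adOp (-A) T = -adOp A T := by
  simp only [adOp, neg_mul, mul_neg, neg_sub_neg]
  abel

lemma adOp_sum_left {ι : Type*} (s : Finset ι) (A : ι → 𝓢(EuclSp ν, ℂ) →L[ℝ] 𝓢(EuclSp ν, ℂ))
    (T : 𝓢(EuclSp ν, ℂ) →L[ℝ] 𝓢(EuclSp ν, ℂ)) :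
    adOp (∑ i ∈ s, A i) T = ∑ i ∈ s, adOp (A i) T := by
  simp only [adOp, Finset.sum_mul, Finset.mul_sum, Finset.sum_sub_distrib]

lemma adOp_add_right (A T S : 𝓢(EuclSp ν, ℂ) →L[ℝ] 𝓢(EuclSp ν, ℂ)) :
    adOp A (T + S) = adOp A T + adOp A S := by
  simp only [adOp, mul_add, add_mul]; abel

lemma adOp_smul_right (c : ℝ) (A T : 𝓢(EuclSp ν, ℂ) →L[ℝ] 𝓢(EuclSp ν, ℂ)) :
    adOp A (c • T) = c • adOp A T := by
  simp only [adOp, mul_smul_comm, smul_mul_assoc, smul_sub]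

lemma adOp_zero_right (A : 𝓢(EuclSp ν, ℂ) →L[ℝ] 𝓢(EuclSp ν, ℂ)) : adOp A 0 = 0 := by
  simp [adOp]

lemma Good.sum {ι : Type*} {m : ℕ} (s : Finset ι)
    (f : ι → 𝓢(EuclSp ν, ℂ) →L[ℝ] 𝓢(EuclSp ν, ℂ)) (h : ∀ i ∈ s, Good ν m (f i)) :
    Good ν m (∑ i ∈ s, f i) :=
  Finset.sum_induction f _ (fun _ _ ha hb => ha.add hb) (Good.zero m) h

lemma Good.ad_sq {m : ℕ} {T : 𝓢(EuclSp ν, ℂ) →L[ℝ] 𝓢(EuclSp ν, ℂ)} (i : Fin ν)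
    (h : Good ν m T) : Good ν (m + 1) (adOp (partialDerivOp ν i * partialDerivOp ν i) T) := by
  induction h with
  | gen h l m hl =>
      set D := partialDerivOp ν i with hD
      have key : adOp (D * D) (mulOp (schwartz_htg h) * derivL ν l)
          = mulOp (schwartz_htg (partialDerivOp ν i h)) * derivL ν (i :: l)
            + (mulOp (schwartz_htg (partialDerivOp ν i h)) * derivL ν (i :: l)
              + mulOp (schwartz_htg (partialDerivOp ν i (partialDerivOp ν i h)))
                  * derivL ν l) := by
        have e1 : D * (mulOp (schwartz_htg h) * derivL ν l)
            = mulOp (schwartz_htg h) * derivL ν (i :: l)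
              + mulOp (schwartz_htg (partialDerivOp ν i h)) * derivL ν l := by
          rw [pderiv_mul_mulOp_mul, derivL_cons]
        have e2 : D * (mulOp (schwartz_htg h) * derivL ν (i :: l))
            = mulOp (schwartz_htg h) * derivL ν (i :: i :: l)
              + mulOp (schwartz_htg (partialDerivOp ν i h)) * derivL ν (i :: l) := by
          rw [pderiv_mul_mulOp_mul, derivL_cons, derivL_cons, derivL_cons]
        have e3 : D * (mulOp (schwartz_htg (partialDerivOp ν i h)) * derivL ν l)
            = mulOp (schwartz_htg (partialDerivOp ν i h)) * derivL ν (i :: l)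
              + mulOp (schwartz_htg (partialDerivOp ν i (partialDerivOp ν i h)))
                  * derivL ν l := by
          rw [pderiv_mul_mulOp_mul, derivL_cons]
        have e4 : (mulOp (schwartz_htg h) * derivL ν l) * (D * D)
            = mulOp (schwartz_htg h) * derivL ν (i :: i :: l) := by
          have hc := (commute_pderiv_derivL i l).eq
          rw [derivL_cons, derivL_cons, mul_assoc]
          congr 1
          calc derivL ν l * (D * D) = (derivL ν l * D) * D := by rw [mul_assoc]
            _ = (D * derivL ν l) * D := by rw [← hc]
            _ = D * (derivL ν l * D) := by rw [mul_assoc]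
            _ = D * (D * derivL ν l) := by rw [← hc]
        show (D * D) * (mulOp (schwartz_htg h) * derivL ν l)
            - (mulOp (schwartz_htg h) * derivL ν l) * (D * D) = _
        rw [mul_assoc, e1, mul_add, e2, e3, e4]
        abel
      rw [key]
      have h1 : (i :: l).length ≤ m + 1 := by simpa using Nat.succ_le_succ hl
      exact .add (.gen _ _ _ h1) (.add (.gen _ _ _ h1)
        (.gen _ _ _ (hl.trans (Nat.le_succ m))))
  | zero m => rw [adOp_zero_right]; exact .zero _
  | add _ _ ih1 ih2 => rw [adOp_add_right]; exact ih1.add ih2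
  | smul c _ ih => rw [adOp_smul_right]; exact ih.smul c

lemma Good.ad {V : 𝓢(EuclSp ν, ℂ)} (hV : Function.HasTemperateGrowth ⇑V) (β : ℝ)
    {m : ℕ} {T : 𝓢(EuclSp ν, ℂ) →L[ℝ] 𝓢(EuclSp ν, ℂ)} (h : Good ν m T) :
    Good ν (m + 1) (adOp (negLaplacian ν + β • mulOp hV) T) := by
  rw [adOp_add_left, adOp_smul_left]
  refine Good.add ?_ (Good.smul β ?_)
  · rw [show negLaplacian ν = -∑ i : Fin ν, partialDerivOp ν i * partialDerivOp ν i from rfl,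
      adOp_neg_left, adOp_sum_left]
    exact (Good.sum _ _ fun i _ => h.ad_sq i).neg
  · have : adOp (mulOp hV) T = mulOp (schwartz_htg V) * T - T * mulOp (schwartz_htg V) := rfl
    rw [this]
    exact ((h.mulOp_mul V).sub (h.mul_mulOp V)).mono (Nat.le_succ m)

lemma good_iter {V g : 𝓢(EuclSp ν, ℂ)} (hV : Function.HasTemperateGrowth ⇑V)
    (hg : Function.HasTemperateGrowth ⇑g) (β : ℝ) (m : ℕ) :
    Good ν m ((adOp (negLaplacian ν + β • mulOp hV))^[m] (mulOp hg)) := by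
  induction m with
  | zero =>
      rw [Function.iterate_zero_apply]
      have h0 := Good.gen (ν := ν) g [] 0 (le_refl 0)
      rw [derivL_nil, mul_one] at h0
      exact h0
  | succ n ih =>
      rw [Function.iterate_succ_apply']
      exact ih.ad hV β

end adalg

section planch

variable {ν : ℕ}

lemma memL2 (f : 𝓢(EuclSp ν, ℂ)) : MemLp ⇑f 2 volume := by
  rw [memLp_two_iff_integrable_sq_norm f.continuous.aestronglyMeasurable]
  refine (f.integrable.norm.const_mul (SchwartzMap.seminorm ℝ 0 0 f)).mono'
    ((f.continuous.norm.pow 2).aestronglyMeasurable) (ae_of_all _ fun x => ?_)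
  rw [Real.norm_of_nonneg (by positivity), pow_two]
  exact mul_le_mul_of_nonneg_right (f.norm_le_seminorm ℝ x) (norm_nonneg _)

lemma conj_circle_smul (t : ℝ) (z : ℂ) :
    (starRingEnd ℂ) (((Real.fourierChar t : Circle) : ℂ) * z)
      = ((Real.fourierChar (-t) : Circle) : ℂ) * (starRingEnd ℂ) z := by
  rw [map_mul]
  congr 1
  rw [Real.fourierChar_apply, Real.fourierChar_apply, ← Complex.exp_conj]
  congr 1
  simp only [map_mul, Complex.conj_ofReal, Complex.conj_I]
  push_cast
  ring

lemma fourier_conj (f : EuclSp ν → ℂ) (w : EuclSp ν) :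
    𝓕 (fun x => (starRingEnd ℂ) (f x)) w
      = (starRingEnd ℂ) (𝓕⁻ f w) := by
  rw [Real.fourier_eq, Real.fourierInv_eq, ← integral_conj]
  congr 1
  funext v
  simp only [Circle.smul_def, smul_eq_mul]
  rw [← conj_circle_smul]

lemma plancherel (f : 𝓢(EuclSp ν, ℂ)) :
    eLpNorm (𝓕 ⇑f) 2 volume = eLpNorm ⇑f 2 volume := by
  classical
  set F := fourierTransformCLM ℂ f with hFdef
  have hFc : ⇑F = 𝓕 ⇑f := by simp [hFdef, SchwartzMap.fourier_coe]
  have hg_int : Integrable (fun ξ => (starRingEnd ℂ) (𝓕 ⇑f ξ)) volume := by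
    have := (Complex.conjCLE.toContinuousLinearMap).integrable_comp F.integrable (μ := volume)
    simpa [hFc] using this
  have hflip : (innerₗ (EuclSp ν)).flip = innerₗ (EuclSp ν) := by
    apply LinearMap.ext; intro x; apply LinearMap.ext; intro y
    exact real_inner_comm x y
  have mult := VectorFourier.integral_bilin_fourierIntegral_eq_flip
      (M := ContinuousLinearMap.mul ℂ ℂ) (L := innerₗ (EuclSp ν))
      Real.continuous_fourierChar (by exact continuous_inner) (f.integrable (μ := volume)) hg_int
  rw [hflip] at mult
  have hinv : (fun x => 𝓕
        (fun ξ => (starRingEnd ℂ) (𝓕 ⇑f ξ)) x)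
      = fun x => (starRingEnd ℂ) (f x) := by
    funext x
    rw [fourier_conj]
    congr 1
    rw [f.continuous.fourierInv_fourier_eq f.integrable (hFc ▸ F.integrable)]
  have key : ∫ ξ, 𝓕 ⇑f ξ * (starRingEnd ℂ) (𝓕 ⇑f ξ)
      = ∫ x, f x * (starRingEnd ℂ) (f x) := by
    have h1 : ∀ (u : EuclSp ν → ℂ) (w : EuclSp ν), VectorFourier.fourierIntegral
        Real.fourierChar volume (innerₗ (EuclSp ν)) u w = 𝓕 u w :=
      fun _ _ => rfl
    simpa only [ContinuousLinearMap.mul_apply', h1, hinv] using mult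
  have sq : ∀ z : ℂ, z * (starRingEnd ℂ) z = ((‖z‖ ^ 2 : ℝ) : ℂ) := by
    intro z
    rw [Complex.mul_conj, Complex.normSq_eq_norm_sq]
  have e1 : ∫ ξ, 𝓕 ⇑f ξ * (starRingEnd ℂ) (𝓕 ⇑f ξ)
      = ((∫ ξ, ‖𝓕 ⇑f ξ‖ ^ 2 : ℝ) : ℂ) := by
    calc ∫ ξ, 𝓕 ⇑f ξ * (starRingEnd ℂ) (𝓕 ⇑f ξ)
        = ∫ ξ, ((‖𝓕 ⇑f ξ‖ ^ 2 : ℝ) : ℂ) :=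
          integral_congr_ae (ae_of_all _ fun ξ => sq _)
      _ = _ := integral_ofReal
  have e2 : ∫ x, f x * (starRingEnd ℂ) (f x) = ((∫ x, ‖f x‖ ^ 2 : ℝ) : ℂ) := by
    calc ∫ x, f x * (starRingEnd ℂ) (f x) = ∫ x, ((‖f x‖ ^ 2 : ℝ) : ℂ) :=
          integral_congr_ae (ae_of_all _ fun x => sq _)
      _ = _ := integral_ofReal
  have hreal : ∫ ξ, ‖𝓕 ⇑f ξ‖ ^ 2 = ∫ x, ‖f x‖ ^ 2 := by
    have := key
    rw [e1, e2] at this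
    exact_mod_cast this
  have hm1 : MemLp (𝓕 ⇑f) 2 volume := hFc ▸ memL2 F
  have hm2 : MemLp ⇑f 2 volume := memL2 f
  rw [hm1.eLpNorm_eq_integral_rpow_norm two_ne_zero ENNReal.ofNat_ne_top,
      hm2.eLpNorm_eq_integral_rpow_norm two_ne_zero ENNReal.ofNat_ne_top]
  congr 2
  rw [show ((2:ENNReal).toReal) = ((2:ℕ):ℝ) by norm_num]
  simp only [Real.rpow_natCast]
  exact hreal

section anal

variable {ν : ℕ}

lemma fourier_pderiv (Φ : 𝓢(EuclSp ν, ℂ)) (i : Fin ν) (ξ : EuclSp ν) :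
    𝓕 ⇑(partialDerivOp ν i Φ) ξ
      = (2 * (π : ℂ) * Complex.I * ((ξ i : ℝ) : ℂ)) * 𝓕 ⇑Φ ξ := by
  have hint : Integrable (fderiv ℝ ⇑Φ) volume := by
    have := (SchwartzMap.fderivCLM ℝ (EuclSp ν) ℂ Φ).integrable (μ := volume)
    simpa [show ⇑(SchwartzMap.fderivCLM ℝ (EuclSp ν) ℂ Φ) = fderiv ℝ ⇑Φ from rfl] using this
  have h0 : ⇑(partialDerivOp ν i Φ)
      = fun x => fderiv ℝ ⇑Φ x (EuclideanSpace.single i (1:ℝ)) := funext fun x => pderivOp_apply _ _ _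
  rw [h0, ← Real.fourier_continuousLinearMap_apply hint,
    Real.fourier_fderiv (Φ.integrable (μ := volume)) Φ.differentiable hint]
  rw [VectorFourier.fourierSMulRight_apply]
  simp only [ContinuousLinearMap.neg_apply, innerSL_apply_apply ℝ]
  rw [EuclideanSpace.inner_single_right]
  simp only [RCLike.inner_apply, conj_trivial, one_mul, neg_smul, smul_neg, neg_neg,
    smul_smul, smul_eq_mul, Complex.real_smul]
  push_cast
  ring

lemma coord_abs_le (ξ : EuclSp ν) (i : Fin ν) : |ξ i| ≤ ‖ξ‖ := by
  have h := abs_real_inner_le_norm ξ (EuclideanSpace.single i (1:ℝ))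
  rw [EuclideanSpace.inner_single_right] at h
  simpa [EuclideanSpace.norm_single] using h

lemma norm_fourier_derivL_le (Φ : 𝓢(EuclSp ν, ℂ)) (l : List (Fin ν)) (ξ : EuclSp ν) :
    ‖𝓕 ⇑(derivL ν l Φ) ξ‖
      ≤ (2 * π * ‖ξ‖) ^ l.length * ‖𝓕 ⇑Φ ξ‖ := by
  induction l with
  | nil =>
      simp [derivL_nil, ContinuousLinearMap.one_apply]
  | cons i l ih =>
      rw [derivL_cons, ContinuousLinearMap.mul_apply, fourier_pderiv, norm_mul]
      have h1 : ‖2 * (π : ℂ) * Complex.I * ((ξ i : ℝ) : ℂ)‖ ≤ 2 * π * ‖ξ‖ := by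
        rw [norm_mul, norm_mul, norm_mul]
        simp only [Complex.norm_ofNat, Complex.norm_real, Complex.norm_I, Real.norm_eq_abs,
          mul_one, _root_.abs_of_nonneg pi_pos.le]
        have := coord_abs_le ξ i
        nlinarith [pi_pos]
      calc ‖2 * (π : ℂ) * Complex.I * ((ξ i : ℝ) : ℂ)‖ * ‖𝓕 ⇑(derivL ν l Φ) ξ‖
          ≤ (2 * π * ‖ξ‖) * ((2 * π * ‖ξ‖) ^ l.length * ‖𝓕 ⇑Φ ξ‖) := by
            have hnn : (0:ℝ) ≤ 2 * π * ‖ξ‖ := by positivity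
            exact mul_le_mul h1 ih (norm_nonneg _) hnn
        _ = (2 * π * ‖ξ‖) ^ (i :: l).length * ‖𝓕 ⇑Φ ξ‖ := by
            rw [List.length_cons, pow_succ]
            ring

end anal

section bounds

variable {ν : ℕ}

lemma pow_le_pow_add_one' (t : ℝ) (ht : 0 ≤ t) {k m : ℕ} (h : k ≤ m) :
    t ^ k ≤ t ^ m + 1 := by
  rcases le_total t 1 with h1 | h1
  · calc t ^ k ≤ 1 := pow_le_one₀ ht h1
      _ ≤ t ^ m + 1 := le_add_of_nonneg_left (pow_nonneg ht m)
  · calc t ^ k ≤ t ^ m := pow_le_pow_right₀ h1 h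
      _ ≤ t ^ m + 1 := le_add_of_nonneg_right zero_le_one

lemma sobolev_eq (m : ℕ) (Φ : 𝓢(EuclSp ν, ℂ)) :
    sobolevSeminorm ν (m : ℝ) Φ
      = eLpNorm (fun ξ : EuclSp ν =>
          (2 * π * ‖ξ‖) ^ m * ‖𝓕 ⇑Φ ξ‖) 2 volume := by
  unfold sobolevSeminorm
  congr 1
  funext ξ
  rw [Real.rpow_natCast]
  simp [SchwartzMap.fourier_coe]

lemma derivL_L2_le (Φ : 𝓢(EuclSp ν, ℂ)) (l : List (Fin ν)) {m : ℕ} (hl : l.length ≤ m) :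
    eLpNorm ⇑(derivL ν l Φ) 2 volume
      ≤ sobolevSeminorm ν (m : ℝ) Φ + eLpNorm ⇑Φ 2 volume := by
  rw [← plancherel (derivL ν l Φ)]
  have hFΦcont : Continuous (𝓕 ⇑Φ) := by
    rw [← SchwartzMap.fourier_coe, ← fourierTransformCLM_apply ℂ Φ]
    exact (fourierTransformCLM ℂ Φ).continuous
  have hpt : ∀ ξ, ‖𝓕 ⇑(derivL ν l Φ) ξ‖ ≤
      ‖(2 * π * ‖ξ‖) ^ m * ‖𝓕 ⇑Φ ξ‖ + ‖𝓕 ⇑Φ ξ‖‖ := by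
    intro ξ
    have h1 := norm_fourier_derivL_le Φ l ξ
    have h2 : (2 * π * ‖ξ‖) ^ l.length * ‖𝓕 ⇑Φ ξ‖
        ≤ (2 * π * ‖ξ‖) ^ m * ‖𝓕 ⇑Φ ξ‖ + ‖𝓕 ⇑Φ ξ‖ := by
      have h3 := pow_le_pow_add_one' (2 * π * ‖ξ‖) (by positivity) hl
      nlinarith [norm_nonneg (𝓕 ⇑Φ ξ)]
    rw [Real.norm_of_nonneg (by positivity)]
    exact h1.trans h2
  refine (eLpNorm_mono hpt).trans ?_
  have hm1 : AEStronglyMeasurable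
      (fun ξ : EuclSp ν => (2 * π * ‖ξ‖) ^ m * ‖𝓕 ⇑Φ ξ‖) volume :=
    (((continuous_const.mul continuous_norm).pow m).mul hFΦcont.norm).aestronglyMeasurable
  have hm2 : AEStronglyMeasurable
      (fun ξ : EuclSp ν => ‖𝓕 ⇑Φ ξ‖) volume :=
    hFΦcont.norm.aestronglyMeasurable
  refine (eLpNorm_add_le hm1 hm2 one_le_two).trans ?_
  rw [sobolev_eq]
  gcongr
  rw [eLpNorm_norm, plancherel]

lemma good_bound {ν m : ℕ} {T : 𝓢(EuclSp ν, ℂ) →L[ℝ] 𝓢(EuclSp ν, ℂ)} (hT : Good ν m T) :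
    ∃ C : ENNReal, C ≠ ⊤ ∧ ∀ Φ : 𝓢(EuclSp ν, ℂ),
      eLpNorm ⇑(T Φ) 2 volume
        ≤ C * (sobolevSeminorm ν (m : ℝ) Φ + eLpNorm ⇑Φ 2 volume) := by
  induction hT with
  | gen h l m hl =>
      refine ⟨(((SchwartzMap.seminorm ℝ 0 0) h).toNNReal : NNReal), ENNReal.coe_ne_top,
        fun Φ => ?_⟩
      have step1 : eLpNorm ⇑((mulOp (schwartz_htg h) * derivL ν l) Φ) 2 volume
          ≤ (((SchwartzMap.seminorm ℝ 0 0) h).toNNReal) • eLpNorm ⇑(derivL ν l Φ) 2 volume := by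
        refine eLpNorm_le_nnreal_smul_eLpNorm_of_ae_le_mul (ae_of_all _ fun x => ?_) 2
        rw [ContinuousLinearMap.mul_apply, mulOp_apply, ← NNReal.coe_le_coe]
        push_cast
        rw [norm_mul, mul_comm, Real.coe_toNNReal _ (apply_nonneg _ _)]
        exact mul_le_mul_of_nonneg_right (h.norm_le_seminorm ℝ x) (norm_nonneg _)
      refine step1.trans ?_
      rw [ENNReal.smul_def, smul_eq_mul]
      exact mul_le_mul_right (derivL_L2_le Φ l hl) _
  | zero m =>
      refine ⟨0, by simp, fun Φ => ?_⟩
      rw [ContinuousLinearMap.zero_apply, show ⇑(0 : 𝓢(EuclSp ν, ℂ)) = 0 from rfl, eLpNorm_zero]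
      exact zero_le
  | add hT hS ihT ihS =>
      obtain ⟨C1, hC1, h1⟩ := ihT
      obtain ⟨C2, hC2, h2⟩ := ihS
      refine ⟨C1 + C2, by simp [hC1, hC2, ENNReal.add_ne_top], fun Φ => ?_⟩
      have key : ∀ u v : 𝓢(EuclSp ν, ℂ), eLpNorm ⇑(u + v) 2 volume
          ≤ eLpNorm ⇑u 2 volume + eLpNorm ⇑v 2 volume := fun u v => by
        rw [show ⇑(u + v) = ⇑u + ⇑v from rfl]
        exact eLpNorm_add_le u.continuous.aestronglyMeasurable
          v.continuous.aestronglyMeasurable one_le_two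
      rw [ContinuousLinearMap.add_apply]
      refine (key _ _).trans ?_
      rw [add_mul]
      exact add_le_add (h1 Φ) (h2 Φ)
  | smul c hT ih =>
      obtain ⟨C, hC, h1⟩ := ih
      refine ⟨(‖c‖₊ : ENNReal) * C, ENNReal.mul_ne_top ENNReal.coe_ne_top hC, fun Φ => ?_⟩
      have key : ∀ u : 𝓢(EuclSp ν, ℂ), eLpNorm ⇑(c • u) 2 volume
          = (‖c‖₊ : ENNReal) * eLpNorm ⇑u 2 volume := fun u => by
        rw [show ⇑(c • u) = c • ⇑u from rfl, eLpNorm_const_smul]; rfl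
      rw [ContinuousLinearMap.smul_apply, key, mul_assoc]
      exact mul_le_mul_right (h1 Φ) _



/-- For `A = −Δ + βV` with `V` a real-valued Schwartz function and `g` a Schwartz function on
`ℝ^ν`, for each `m ≥ 0` there is a constant `C_{g,m}` with
`‖ad_A^m(g)Φ‖_{L²} ≤ C_{g,m}(‖(−Δ)^{m/2}Φ‖_{L²} + ‖Φ‖_{L²})` for all Schwartz `Φ`. -/
theorem iterated_commutator_mul_bound
    (ν : ℕ) (β : ℝ)
    (V : 𝓢(EuclSp ν, ℂ)) (hVreal : ∀ x, (V x).im = 0)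
    (hV : Function.HasTemperateGrowth (⇑V))
    (g : 𝓢(EuclSp ν, ℂ)) (hg : Function.HasTemperateGrowth (⇑g))
    (m : ℕ) :
    ∃ C : ENNReal, C ≠ ⊤ ∧ ∀ Φ : 𝓢(EuclSp ν, ℂ),
      eLpNorm (⇑(((adOp (negLaplacian ν + β • mulOp hV))^[m] (mulOp hg)) Φ)) 2 volume ≤
        C * (sobolevSeminorm ν (m : ℝ) Φ + eLpNorm (⇑Φ) 2 volume) := by
  exact good_bound (good_iter hV hg β m)
end bounds
end planch
end
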